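/- Let B and D be two orthogonal projectors on ℝ^N and write D^c := I − D. Then every bandlimited signal can be uniquely reconstructed from its samples on the vertex set selected by D — that is, the map f ↦ Df is injective on the subspace {f : Bf = f} — if and only if ‖B D^c‖₂ < 1 (equivalently ‖D^c B‖₂ < 1), i.e., if and only if B D^c has no eigenvector with singular value 1 (no bandlimited vector perfectly localized on the complement of the sampling set). -/

import Mathlib

/-!
With `P = B` and `Q = I - D` viewed as orthogonal projections of `ℝ^N`, injectivity of `f ↦ Df`
on bandlimited signals fails exactly when some `f ≠ 0` satisfies `Pf = f` and `Qf = f`, and such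
an `f` forces `‖PQ‖ = 1`. Conversely `‖PQ‖ ≤ 1` always; if equality holds, a unit vector `x`
attains the norm (finite dimension), so `y = Qx` satisfies `‖Py‖ = ‖y‖ = 1`. A projection preserves
the norm only of vectors in its range, so `Py = y`, and `y` is a nonzero common fixed vector.
-/

open Matrix

/-- The spectral norm of a real `N × N` matrix: the operator norm of the induced
linear map on `ℝ^N` with the Euclidean norm. -/
noncomputable def matrixSpectralNorm {N : ℕ} (M : Matrix (Fin N) (Fin N) ℝ) : ℝ :=
  ‖Matrix.toEuclideanCLM (𝕜 := ℝ) M‖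

theorem ContinuousLinearMap.exists_norm_eq_one_norm_apply_eq_opNorm {𝕜 E F : Type*} [RCLike 𝕜]
    [NormedAddCommGroup E] [NormedSpace 𝕜 E] [ProperSpace E] [Nontrivial E]
    [SeminormedAddCommGroup F] [NormedSpace 𝕜 F] (T : E →L[𝕜] F) :
    ∃ x, ‖x‖ = 1 ∧ ‖T x‖ = ‖T‖ := by
  obtain ⟨x, hx, hmax⟩ := (isCompact_sphere (0 : E) 1).exists_isMaxOn
    (Set.nonempty_coe_sort.mp (NormedSpace.sphere_nonempty_rclike 𝕜 zero_le_one))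
    (continuous_norm.comp T.continuous).continuousOn
  have hx1 : ‖x‖ = 1 := mem_sphere_zero_iff_norm.mp hx
  refine ⟨x, hx1, le_antisymm (by simpa [hx1] using T.le_opNorm x) ?_⟩
  exact T.opNorm_le_of_unit_norm (norm_nonneg _) fun y hy => hmax (mem_sphere_zero_iff_norm.mpr hy)

theorem Matrix.isStarProjection_iff_of_real {n : Type*} [Fintype n] (M : Matrix n n ℝ) :
    IsStarProjection M ↔ M * M = M ∧ Mᵀ = M := by
  rw [isStarProjection_iff', star_eq_conjTranspose, conjTranspose_eq_transpose_of_trivial]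

namespace IsStarProjection

variable {𝕜 E : Type*} [RCLike 𝕜] [NormedAddCommGroup E] [InnerProductSpace 𝕜 E] [CompleteSpace E]
  {p q : E →L[𝕜] E}

theorem norm_apply_le (hp : IsStarProjection p) (x : E) : ‖p x‖ ≤ ‖x‖ := by
  obtain ⟨K, _, rfl⟩ := isStarProjection_iff_eq_starProjection.mp hp
  exact K.norm_starProjection_apply_le x

theorem norm_apply_eq_iff (hp : IsStarProjection p) {x : E} : ‖p x‖ = ‖x‖ ↔ p x = x := by
  obtain ⟨K, _, rfl⟩ := isStarProjection_iff_eq_starProjection.mp hp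
  rw [← K.mem_iff_norm_starProjection, K.starProjection_eq_self_iff]

theorem norm_mul_one_sub_lt_one_iff [FiniteDimensional 𝕜 E] (hp : IsStarProjection p)
    (hq : IsStarProjection q) : ‖p * (1 - q)‖ < 1 ↔ ∀ x, p x = x → q x = 0 → x = 0 := by
  constructor
  · intro hlt x hpx hqx
    have hfix : (p * (1 - q)) x = x := by simp [hpx, hqx]
    have hbound := (p * (1 - q)).le_opNorm x
    rw [hfix] at hbound
    by_contra hx
    exact hbound.not_gt (mul_lt_of_lt_one_left (norm_pos_iff.mpr hx) hlt)
  · intro hfix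
    have hle : ‖p * (1 - q)‖ ≤ 1 :=
      (norm_mul_le _ _).trans (mul_le_one₀ hp.norm_le (norm_nonneg _) hq.one_sub.norm_le)
    refine hle.lt_of_ne fun heq => ?_
    have := FiniteDimensional.proper_rclike 𝕜 E
    have : Nontrivial E := by
      by_contra h
      rw [not_nontrivial_iff_subsingleton] at h
      simp [Subsingleton.elim (p * (1 - q)) 0] at heq
    obtain ⟨x, hx1, hxT⟩ := (p * (1 - q)).exists_norm_eq_one_norm_apply_eq_opNorm
    set y := (1 - q) x
    have hpy1 : ‖p y‖ = 1 := hxT.trans heq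
    have hy1 : ‖y‖ = 1 :=
      le_antisymm (hx1 ▸ hq.one_sub.norm_apply_le x) (hpy1 ▸ hp.norm_apply_le y)
    have hpy : p y = y := hp.norm_apply_eq_iff.mp (hpy1.trans hy1.symm)
    have hqy : q y = 0 := congr($(hq.mul_one_sub_self) x)
    simp [hfix y hpy hqy] at hy1

end IsStarProjection

/-- **Sampling theorem (Theorem 3).**
Let `B` and `D` be orthogonal projectors on `ℝ^N`, `D^c := I − D`. Every bandlimited signal
can be uniquely reconstructed from its samples — the map `f ↦ Df` is injective on
`{f : Bf = f}` — iff `‖B D^c‖₂ < 1` (equivalently `‖D^c B‖₂ < 1`), i.e. iff `B D^c` has no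
bandlimited vector perfectly localized on the complement of the sampling set. -/
theorem sampling_theorem
    {N : ℕ} (B D : Matrix (Fin N) (Fin N) ℝ)
    (hBsym : B.transpose = B) (hDsym : D.transpose = D)
    (hBidem : B * B = B) (hDidem : D * D = D) :
    Set.InjOn D.mulVec {f : Fin N → ℝ | B.mulVec f = f} ↔
      matrixSpectralNorm (B * (1 - D)) < 1 := by
  have hB := ((isStarProjection_iff_of_real B).mpr ⟨hBidem, hBsym⟩).map (toEuclideanCLM (𝕜 := ℝ))
  have hD := ((isStarProjection_iff_of_real D).mpr ⟨hDidem, hDsym⟩).map (toEuclideanCLM (𝕜 := ℝ))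
  rw [matrixSpectralNorm, map_mul, map_sub, map_one, hB.norm_mul_one_sub_lt_one_iff hD]
  refine (Set.injOn_iff_map_eq_zero (mulVecLin D) (LinearMap.eqLocus (mulVecLin B) .id)).trans ?_
  exact (WithLp.equiv 2 (Fin N → ℝ)).symm.forall_congr fun {f} => by simp
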